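/- Let α_R, α_F ∈ [0,1), let R be the real 2×2 matrix with rows (1, −α_R) and (−α_F, 1), let T_D : ℝ ⇒ ℝ be a monotone set-valued operator, and define T_NPN : ℝ² ⇒ ℝ² by T_NPN(v₁,v₂) := {R·(u₁,u₂) : u₁ ∈ T_D(v₁), u₂ ∈ T_D(v₂)}. Then T_NPN is (3π/4)-angle-bounded: ⟨x − y, u − v⟩ ≥ −(√2/2)·‖x − y‖·‖u − v‖ for all (x,u), (y,v) in the graph of T_NPN. -/

import Mathlib

/-- The Ebers–Moll matrix with rows `(1, -αR)` and `(-αF, 1)`, applied to a vector of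
`ℝ²` (with the Euclidean inner product and norm). -/
noncomputable def applyEM (aR aF : ℝ) (w : EuclideanSpace ℝ (Fin 2)) :
    EuclideanSpace ℝ (Fin 2) :=
  (WithLp.equiv 2 (Fin 2 → ℝ)).symm
    ((Matrix.of ![![1, -aR], ![-aF, 1]]).mulVec (WithLp.equiv 2 (Fin 2 → ℝ) w))

/-- A set-valued operator `T_D : ℝ ⇒ ℝ` is monotone if `(u - v)(x - y) ≥ 0` whenever
`u ∈ T_D(x)` and `v ∈ T_D(y)`. -/
def MonotoneSetValued (TD : ℝ → Set ℝ) : Prop :=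
  ∀ ⦃x u y v : ℝ⦄, u ∈ TD x → v ∈ TD y → (u - v) * (x - y) ≥ 0

/-- The Ebers–Moll transistor operator `T_NPN : ℝ² ⇒ ℝ²` built from the diode law `T_D`. -/
noncomputable def TNPN (aR aF : ℝ) (TD : ℝ → Set ℝ) (v : EuclideanSpace ℝ (Fin 2)) :
    Set (EuclideanSpace ℝ (Fin 2)) :=
  {w | ∃ u₁ ∈ TD (v 0), ∃ u₂ ∈ TD (v 1),
    w = applyEM aR aF ((WithLp.equiv 2 (Fin 2 → ℝ)).symm ![u₁, u₂])}

/-!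
Write `d = x - y` and `w` for the difference of the diode currents, so that `u - v = R w`.
Monotonicity of `T_D` puts `d` and `w` in a common closed quadrant, and `R` maps that quadrant
into the quadrant widened by `arctan α_F` and `arctan α_R` on either side; hence the angle
between `d` and `R w` is at most `π/2 + max (arctan α_F) (arctan α_R) < 3π/4`. Algebraically,
with `s = ⟪d, R w⟫` and `c = d × R w`, Lagrange's identity `s² + c² = ‖d‖²‖R w‖²` reduces the
angle bound to `-|c| ≤ s`, i.e. to `0 ≤ s + c ∨ 0 ≤ s - c`.
-/

open Real

lemma applyEM_apply_zero (aR aF : ℝ) (w : EuclideanSpace ℝ (Fin 2)) :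
    applyEM aR aF w 0 = w 0 - aR * w 1 := by
  simp [applyEM, dotProduct, Fin.sum_univ_two, sub_eq_add_neg]

lemma applyEM_apply_one (aR aF : ℝ) (w : EuclideanSpace ℝ (Fin 2)) :
    applyEM aR aF w 1 = w 1 - aF * w 0 := by
  simp [applyEM, dotProduct, Fin.sum_univ_two, sub_eq_add_neg, add_comm]

lemma applyEM_sub (aR aF : ℝ) (w w' : EuclideanSpace ℝ (Fin 2)) :
    applyEM aR aF w - applyEM aR aF w' = applyEM aR aF (w - w') := by
  simp only [applyEM, WithLp.equiv_apply, WithLp.equiv_symm_apply, WithLp.ofLp_sub,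
    Matrix.mulVec_sub, WithLp.toLp_sub]

lemma EuclideanSpace.inner_fin_two (x y : EuclideanSpace ℝ (Fin 2)) :
    inner ℝ x y = x 0 * y 0 + x 1 * y 1 := by
  simp only [PiLp.inner_apply, Fin.sum_univ_two, Real.inner_apply]

lemma EuclideanSpace.inner_sq_add_sq_cross (x y : EuclideanSpace ℝ (Fin 2)) :
    inner ℝ x y ^ 2 + (x 0 * y 1 - x 1 * y 0) ^ 2 = (‖x‖ * ‖y‖) ^ 2 := by
  rw [mul_pow, EuclideanSpace.norm_sq_eq, EuclideanSpace.norm_sq_eq, inner_fin_two]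
  simp only [Fin.sum_univ_two, Real.norm_eq_abs, sq_abs]
  ring

lemma neg_sqrt_two_div_two_mul_le {s c N : ℝ} (hN : 0 ≤ N) (hsc : s ^ 2 + c ^ 2 = N ^ 2)
    (hs : -|c| ≤ s) : -(√2 / 2) * N ≤ s := by
  rcases le_or_gt 0 s with hs0 | hs0
  · nlinarith [sqrt_nonneg 2]
  · have hsq : 2 * (-s) ^ 2 ≤ N ^ 2 := by nlinarith [sq_abs c, abs_nonneg c]
    have hsqrt : √2 * -s ≤ N := by
      rw [← pow_le_pow_iff_left₀ (mul_nonneg (sqrt_nonneg 2) (by linarith)) hN two_ne_zero,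
        mul_pow, sq_sqrt zero_le_two]
      exact hsq
    nlinarith [sq_sqrt (zero_le_two : (0:ℝ) ≤ 2), sqrt_nonneg 2]

lemma neg_abs_cross_le_inner {r f a b p q : ℝ} (hr0 : 0 ≤ r) (hr1 : r ≤ 1) (hf0 : 0 ≤ f)
    (hf1 : f ≤ 1) (hap : 0 ≤ a * p) (hbq : 0 ≤ b * q) :
    -|a * (q - f * p) - b * (p - r * q)| ≤ a * (p - r * q) + b * (q - f * p) := by
  by_contra! h
  have hsum : (1 - f) * (a * p) + (1 + r) * (b * q) + (1 - r) * (a * q) < (1 + f) * (b * p) := by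
    linarith [le_abs_self (a * (q - f * p) - b * (p - r * q))]
  have hdiff : (1 + f) * (a * p) + (1 - r) * (b * q) + (1 - f) * (b * p) < (1 + r) * (a * q) := by
    linarith [neg_abs_le (a * (q - f * p) - b * (p - r * q))]
  have hfap : 0 ≤ (1 - f) * (a * p) := mul_nonneg (by linarith) hap
  have hrbq : 0 ≤ (1 - r) * (b * q) := mul_nonneg (by linarith) hbq
  rcases le_or_gt 0 (a * q) with haq | haq
  · have hbp : (1 + r) * (b * q) < (1 + f) * (b * p) := by
      nlinarith [mul_nonneg (sub_nonneg.2 hr1) haq]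
    have hbp0 : 0 ≤ b * p := by nlinarith
    have haq' : (1 + f) * (a * p) < (1 + r) * (a * q) := by
      nlinarith [mul_nonneg (sub_nonneg.2 hf1) hbp0]
    -- `(a q) (b p) = (a p) (b q)` forbids both strict inequalities
    refine (mul_lt_mul'' hbp haq' (by positivity) (by positivity)).ne ?_
    ring
  · nlinarith [mul_nonpos_of_nonneg_of_nonpos hr0 haq.le]

lemma neg_sqrt_two_div_two_mul_le_inner_applyEM {r f : ℝ} (hr0 : 0 ≤ r) (hr1 : r ≤ 1)
    (hf0 : 0 ≤ f) (hf1 : f ≤ 1) {d w : EuclideanSpace ℝ (Fin 2)} (h0 : 0 ≤ d 0 * w 0)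
    (h1 : 0 ≤ d 1 * w 1) :
    -(√2 / 2) * (‖d‖ * ‖applyEM r f w‖) ≤ inner ℝ d (applyEM r f w) := by
  refine neg_sqrt_two_div_two_mul_le (by positivity) (EuclideanSpace.inner_sq_add_sq_cross _ _) ?_
  rw [EuclideanSpace.inner_fin_two, applyEM_apply_zero, applyEM_apply_one]
  exact neg_abs_cross_le_inner hr0 hr1 hf0 hf1 h0 h1

theorem stmt_13 (aR aF : ℝ) (haR : aR ∈ Set.Ico (0 : ℝ) 1) (haF : aF ∈ Set.Ico (0 : ℝ) 1)
    (TD : ℝ → Set ℝ) (hTD : MonotoneSetValued TD) :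
    ∀ ⦃x u y v : EuclideanSpace ℝ (Fin 2)⦄, u ∈ TNPN aR aF TD x → v ∈ TNPN aR aF TD y →
      (inner ℝ (x - y) (u - v) : ℝ) ≥ -(Real.sqrt 2 / 2) * (‖x - y‖ * ‖u - v‖) := by
  rintro x u y v ⟨u₁, hu₁, u₂, hu₂, rfl⟩ ⟨v₁, hv₁, v₂, hv₂, rfl⟩
  rw [applyEM_sub]
  refine neg_sqrt_two_div_two_mul_le_inner_applyEM haR.1 haR.2.le haF.1 haF.2.le ?_ ?_
  · simpa [mul_comm] using hTD hu₁ hv₁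
  · simpa [mul_comm] using hTD hu₂ hv₂
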